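/- Given schemes over a base S (or more generally objects in a category with pullbacks and pushouts): if Y is an object flat over S in the category of commutative rings (dualized statement), then for closed immersions X → X1 and X → X2 with pushout X1 ⊔_X X2, the base change commutes with the pushout: (X1 ⊔_X X2) ×_S Y ≅ (X1 ×_S Y) ⊔_{X ×_S Y} (X2 ×_S Y). In the affine case this says: for C-algebras A1, A2 surjecting onto A0 with nilpotent kernels and a flat C-algebra B, (A1 ×_{A0} A2) ⊗_C B ≅ (A1 ⊗_C B) ×_{A0 ⊗_C B} (A2 ⊗_C B). -/

import Mathlib

open TensorProduct

set_option synthInstance.maxHeartbeats 1000000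
set_option maxHeartbeats 1000000

/-- Affine form of "base change by a flat `Y` commutes with pushouts along closed
immersions": for surjective `C`-algebra homomorphisms `π1 : A1 → A0`, `π2 : A2 → A0`
and a flat `C`-algebra `B`, the natural map
`(A1 ×_{A0} A2) ⊗[C] B → (A1 ⊗[C] B) ×_{A0 ⊗[C] B} (A2 ⊗[C] B)` is bijective:
it is injective and its range is exactly the fiber product. -/
theorem stmt_3 {C A0 A1 A2 B : Type*} [CommRing C] [CommRing A0] [CommRing A1]
    [CommRing A2] [CommRing B] [Algebra C A0] [Algebra C A1] [Algebra C A2] [Algebra C B]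
    (π1 : A1 →ₐ[C] A0) (π2 : A2 →ₐ[C] A0)
    (hπ1 : Function.Surjective π1) (hπ2 : Function.Surjective π2)
    [Module.Flat C B] :
    let P : Subalgebra C (A1 × A2) :=
      AlgHom.equalizer (π1.comp (AlgHom.fst C A1 A2)) (π2.comp (AlgHom.snd C A1 A2))
    let d : (P ⊗[C] B) →ₐ[C] (A1 ⊗[C] B) × (A2 ⊗[C] B) :=
      (Algebra.TensorProduct.map ((AlgHom.fst C A1 A2).comp P.val) (AlgHom.id C B)).prod
        (Algebra.TensorProduct.map ((AlgHom.snd C A1 A2).comp P.val) (AlgHom.id C B))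
    Function.Injective d ∧
      Set.range d = {q : (A1 ⊗[C] B) × (A2 ⊗[C] B) |
        Algebra.TensorProduct.map π1 (AlgHom.id C B) q.1 =
          Algebra.TensorProduct.map π2 (AlgHom.id C B) q.2} := by
  intro P d
  -- the linear-algebra versions of the maps involved
  set ι : P →ₗ[C] A1 × A2 := P.val.toLinearMap with hι
  set f : (A1 × A2) →ₗ[C] A0 :=
    π1.toLinearMap ∘ₗ LinearMap.fst C A1 A2 - π2.toLinearMap ∘ₗ LinearMap.snd C A1 A2 with hf
  have hι_inj : Function.Injective ι := Subtype.val_injective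
  have hexact : Function.Exact ι f := by
    intro y
    constructor
    · intro hy
      refine ⟨⟨y, ?_⟩, rfl⟩
      have : π1 y.1 - π2 y.2 = 0 := hy
      simpa [P, AlgHom.mem_equalizer, sub_eq_zero] using this
    · rintro ⟨⟨x, hx⟩, rfl⟩
      have hx' : π1 x.1 = π2 x.2 := hx
      show π1 x.1 - π2 x.2 = 0
      rw [hx', sub_self]
  have hE : Function.Exact (ι.rTensor B) (f.rTensor B) :=
    Module.Flat.rTensor_exact B hexact
  have hI : Function.Injective (ι.rTensor B) :=
    Module.Flat.rTensor_preserves_injective_linearMap ι hι_inj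
  set e : ((A1 × A2) ⊗[C] B) ≃ₗ[C] (A1 ⊗[C] B) × (A2 ⊗[C] B) :=
    TensorProduct.prodLeft C C A1 A2 B with he
  -- d agrees with e ∘ rTensor ι
  have hd : ∀ x, d x = e (ι.rTensor B x) := by
    intro x
    have : d.toLinearMap = e.toLinearMap ∘ₗ ι.rTensor B :=
      TensorProduct.ext' fun p b => rfl
    exact DFunLike.congr_fun this x
  -- the "difference" map on the product
  set g : (A1 ⊗[C] B) × (A2 ⊗[C] B) →ₗ[C] A0 ⊗[C] B :=
    (Algebra.TensorProduct.map π1 (AlgHom.id C B)).toLinearMap ∘ₗ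
        LinearMap.fst C (A1 ⊗[C] B) (A2 ⊗[C] B) -
      (Algebra.TensorProduct.map π2 (AlgHom.id C B)).toLinearMap ∘ₗ
        LinearMap.snd C (A1 ⊗[C] B) (A2 ⊗[C] B) with hg
  have hge : g ∘ₗ e.toLinearMap = f.rTensor B :=
    TensorProduct.ext' fun x b => by
      obtain ⟨a1, a2⟩ := x
      simp [hg, he, hf, TensorProduct.sub_tmul]
  constructor
  · intro x y hxy
    rw [hd, hd] at hxy
    exact hI (e.injective hxy)
  · ext q
    constructor
    · rintro ⟨x, rfl⟩
      have h0 : f.rTensor B (ι.rTensor B x) = 0 := (hE _).mpr ⟨x, rfl⟩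
      have : g (d x) = 0 := by
        rw [hd]
        have := DFunLike.congr_fun hge (ι.rTensor B x)
        simpa using this.trans h0
      exact sub_eq_zero.mp this
    · intro hq
      have h0 : f.rTensor B (e.symm q) = 0 := by
        have := DFunLike.congr_fun hge (e.symm q)
        simp only [LinearMap.comp_apply, LinearEquiv.coe_coe, LinearEquiv.apply_symm_apply] at this
        rw [← this]
        exact sub_eq_zero.mpr hq
      obtain ⟨x, hx⟩ := (hE _).mp h0
      exact ⟨x, by rw [hd, hx, LinearEquiv.apply_symm_apply]⟩
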